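/- arXiv:2603.06491 — 2 statements merged into one kernel-verified Lean document; each statement's English description precedes it below -/
import Mathlib

section
/- For every n ∈ ℕ, every a ∈ 𝔻, and every f in the Bergman space A²(𝔻), the function z ↦ (n+1)!·zⁿ/(1 − a z)^{n+2} (which equals the n-th partial derivative ∂ₐⁿ E_a(z)) belongs to A²(𝔻), and ∫_𝔻 conj((n+1)!·zⁿ/(1 − a z)^{n+2})·f(z) dμ(z) = f⁽ⁿ⁾(conj(a)), the n-th complex derivative of f evaluated at conj(a). -/
open MeasureTheory Complex Set

noncomputable section

def unitDisk : Set ℂ := {z : ℂ | ‖z‖ < 1}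

def μB : Measure ℂ := (ENNReal.ofReal (Real.pi)⁻¹) • (volume : Measure ℂ)

/-!
Expand the conjugated kernel in powers of `conj z`:
`conj (∂ₐⁿ E_a z) = ∑ₖ (n+1)! C(k+n+1, n+1) (conj a)ᵏ (conj z)^(k+n)`, a series dominated by
`∑ₖ (n+1)! C(k+n+1, n+1) |a|ᵏ < ∞`, so it may be integrated termwise against `f ∈ L¹`.
The monomials `zʲ (conj z)ᵐ` are orthogonal on discs (polar coordinates), so on a disc of
radius `r < 1` the Taylor series of `f` gives `∫ (conj z)ᵐ f = π r^(2m+2) f⁽ᵐ⁾(0) / (m+1)!`,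
and letting `r → 1` extends this to the unit disc. The `k`-th term then contributes
`π (conj a)ᵏ f⁽ᵏ⁺ⁿ⁾(0) / k!`, and these sum to `π f⁽ⁿ⁾(conj a)` by Taylor's theorem for `f⁽ⁿ⁾`.
-/

open Metric Filter ComplexConjugate
open scoped Real Topology Nat NNReal

theorem integrableOn_of_integrableOn_sq_norm {α E : Type*} [MeasurableSpace α]
    [NormedAddCommGroup E] {μ : Measure α} {s : Set α} {g : α → E} (hs : μ s ≠ ⊤)
    (hg : AEStronglyMeasurable g (μ.restrict s))
    (hsq : IntegrableOn (fun x => ‖g x‖ ^ 2) s μ) : IntegrableOn g s μ :=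
  have : IsFiniteMeasure (μ.restrict s) := isFiniteMeasure_restrict.2 hs
  ((memLp_two_iff_integrable_sq_norm hg).2 hsq).integrable one_le_two

theorem tendsto_setIntegral_ball_of_tendsto {X E : Type*} [PseudoMetricSpace X] [MeasurableSpace X]
    [OpensMeasurableSpace X] [NormedAddCommGroup E] [NormedSpace ℝ E] {μ : Measure X}
    {g : X → E} {c : X} {r : ℝ} (hg : IntegrableOn g (ball c r) μ) {u : ℕ → ℝ} (hu : Monotone u)
    (hlim : Tendsto u atTop (𝓝 r)) :
    Tendsto (fun i => ∫ x in ball c (u i), g x ∂μ) atTop (𝓝 (∫ x in ball c r, g x ∂μ)) := by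
  have hunion : ⋃ i, ball c (u i) = ball c r := by
    refine Subset.antisymm (iUnion_subset fun i => ball_subset_ball (hu.ge_of_tendsto hlim i))
      fun x hx => ?_
    obtain ⟨i, hi⟩ := (hlim.eventually (lt_mem_nhds (mem_ball.1 hx))).exists
    exact mem_iUnion.2 ⟨i, mem_ball.2 hi⟩
  rw [← hunion] at hg ⊢
  exact tendsto_setIntegral_of_monotone (fun _ => measurableSet_ball)
    (fun i j hij => ball_subset_ball (hu hij)) hg

theorem iteratedDeriv_iteratedDeriv {𝕜 F : Type*} [NontriviallyNormedField 𝕜]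
    [NormedAddCommGroup F] [NormedSpace 𝕜 F] (g : 𝕜 → F) (m n : ℕ) :
    iteratedDeriv m (iteratedDeriv n g) = iteratedDeriv (m + n) g := by
  simp only [iteratedDeriv_eq_iterate, Function.iterate_add]
  rfl

theorem DifferentiableOn.iteratedDeriv_of_isOpen {E : Type*} [NormedAddCommGroup E]
    [NormedSpace ℂ E] [CompleteSpace E] {f : ℂ → E} {s : Set ℂ}
    (hf : DifferentiableOn ℂ f s) (hs : IsOpen s) (n : ℕ) :
    DifferentiableOn ℂ (iteratedDeriv n f) s := by
  induction n with
  | zero => simpa using hf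
  | succ n ih => simpa only [iteratedDeriv_succ] using ih.deriv hs

theorem setIntegral_ball_zero_eq_integral_polarCoord {E : Type*} [NormedAddCommGroup E]
    [NormedSpace ℝ E] (g : ℂ → E) (r : ℝ) :
    ∫ z in ball (0 : ℂ) r, g z =
      ∫ p in Ioo 0 r ×ˢ Ioo (-π) π, p.1 • g (Complex.polarCoord.symm p) := by
  have htarget : polarCoord.target ∩ (Complex.polarCoord.symm ⁻¹' ball 0 r) =
      Ioo 0 r ×ˢ Ioo (-π) π := by
    ext ⟨ρ, θ⟩
    simp only [polarCoord_target, mem_inter_iff, mem_prod, mem_preimage, mem_ball_zero_iff,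
      norm_polarCoord_symm, mem_Ioi, mem_Ioo]
    constructor
    · rintro ⟨⟨hρ, hθ⟩, hr⟩
      exact ⟨⟨hρ, by rwa [abs_of_pos hρ] at hr⟩, hθ⟩
    · rintro ⟨⟨hρ, hr⟩, hθ⟩
      exact ⟨⟨hρ, hθ⟩, by rwa [abs_of_pos hρ]⟩
  have hmeas : Measurable Complex.polarCoord.symm :=
    Complex.measurableEquivRealProd.symm.measurable.comp continuous_polarCoord_symm.measurable
  rw [← integral_indicator measurableSet_ball, ← Complex.integral_comp_polarCoord_symm,
    ← htarget, ← setIntegral_indicator (measurableSet_ball.preimage hmeas)]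
  congr 1 with p
  by_cases hp : Complex.polarCoord.symm p ∈ ball 0 r
  · rw [indicator_of_mem hp, indicator_of_mem (mem_preimage.2 hp)]
  · rw [indicator_of_notMem hp, indicator_of_notMem (by exact hp), smul_zero]

theorem integral_exp_int_mul_I (l : ℤ) :
    ∫ θ in -π..π, exp (l * θ * I) = (if l = 0 then 2 * π else 0 : ℂ) := by
  split_ifs with hl
  · simp [hl]; ring
  · have hc : (l * I : ℂ) ≠ 0 := mul_ne_zero (Int.cast_ne_zero.2 hl) I_ne_zero
    simp_rw [mul_right_comm _ _ I]
    rw [integral_exp_mul_complex hc]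
    have : exp (l * I * π) = exp (l * I * (-π : ℝ)) :=
      exp_eq_exp_iff_exists_int.2 ⟨l, by push_cast; ring⟩
    rw [this, sub_self, zero_div]

theorem integral_ball_pow_mul_conj_pow (j m : ℕ) {r : ℝ} (hr : 0 ≤ r) :
    ∫ z in ball (0 : ℂ) r, z ^ j * conj z ^ m =
      if j = m then (π * r ^ (2 * m + 2) / (m + 1) : ℂ) else 0 := by
  have hpolar (p : ℝ × ℝ) :
      p.1 • (Complex.polarCoord.symm p ^ j * conj (Complex.polarCoord.symm p) ^ m) =
        (p.1 : ℂ) ^ (j + m + 1) * exp (((j - m : ℤ) : ℂ) * p.2 * I) := by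
    have hsymm : Complex.polarCoord.symm p = p.1 * exp (p.2 * I) := by
      rw [Complex.polarCoord_symm_apply, exp_mul_I, ← ofReal_cos, ← ofReal_sin]
    rw [hsymm, map_mul, conj_ofReal, ← exp_conj, map_mul, conj_ofReal, conj_I, real_smul,
      mul_pow, mul_pow, ← exp_nat_mul, ← exp_nat_mul,
      show ((j - m : ℤ) : ℂ) * p.2 * I = j * (p.2 * I) + m * (p.2 * -I) by push_cast; ring,
      exp_add]
    ring
  have hradial : ∫ ρ in Ioo 0 r, (ρ : ℂ) ^ (j + m + 1) = r ^ (j + m + 2) / (j + m + 2) := by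
    rw [← integral_Ioc_eq_integral_Ioo, ← intervalIntegral.integral_of_le hr]
    simp_rw [← ofReal_pow]
    rw [intervalIntegral.integral_ofReal, integral_pow]
    push_cast
    ring
  rw [setIntegral_ball_zero_eq_integral_polarCoord]
  simp_rw [hpolar]
  rw [Measure.volume_eq_prod, ← Measure.prod_restrict,
    integral_prod_mul (fun ρ : ℝ => (ρ : ℂ) ^ (j + m + 1))
      (fun θ : ℝ => exp (((j - m : ℤ) : ℂ) * θ * I)),
    hradial, ← integral_Ioc_eq_integral_Ioo,
    ← intervalIntegral.integral_of_le (by linarith [Real.pi_pos]), integral_exp_int_mul_I]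
  simp_rw [sub_eq_zero, Nat.cast_inj]
  split_ifs with h
  · subst h
    rw [show j + j + 2 = 2 * j + 2 by ring, show (j + j + 2 : ℂ) = 2 * (j + 1) by ring]
    field_simp
  · simp

section Taylor

variable {f : ℂ → ℂ} {R : ℝ}

theorem hasSum_taylorSeries_zero (hf : DifferentiableOn ℂ f (ball 0 R)) {z : ℂ}
    (hz : z ∈ ball 0 R) :
    HasSum (fun k => iteratedDeriv k f 0 / (k ! : ℂ) * z ^ k) (f z) := by
  refine (Complex.hasSum_taylorSeries_on_ball hf hz).congr_fun fun k => ?_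
  simp only [sub_zero, smul_eq_mul]
  ring

theorem summable_norm_iteratedDeriv_div_factorial_mul_pow (hf : DifferentiableOn ℂ f (ball 0 R))
    {r : ℝ} (hr0 : 0 ≤ r) (hr : r < R) :
    Summable fun k => ‖iteratedDeriv k f 0 / (k ! : ℂ)‖ * r ^ k := by
  obtain ⟨ρ, hrρ, hρR⟩ := exists_between hr
  lift ρ to ℝ≥0 using hr0.trans hrρ.le
  lift r to ℝ≥0 using hr0
  have hρ : 0 < ρ := lt_of_le_of_lt r.2 hrρ
  have hcauchy := (hf.mono (closedBall_subset_ball hρR)).hasFPowerSeriesOnBall hρ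
  have htaylor := (hf.analyticAt (isOpen_ball.mem_nhds (mem_ball_self
    (lt_of_lt_of_le (NNReal.coe_pos.2 hρ) hρR.le)))).hasFPowerSeriesAt
  have hradius := htaylor.eq_formalMultilinearSeries hcauchy.hasFPowerSeriesAt ▸ hcauchy.r_le
  simpa only [FormalMultilinearSeries.ofScalars_norm] using
    FormalMultilinearSeries.summable_norm_mul_pow _ (lt_of_lt_of_le (by exact_mod_cast hrρ) hradius)

theorem integral_ball_conj_pow_mul_of_lt (hf : DifferentiableOn ℂ f (ball 0 R)) (m : ℕ) {r : ℝ}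
    (hr0 : 0 ≤ r) (hr : r < R) :
    ∫ z in ball (0 : ℂ) r, conj z ^ m * f z =
      π * r ^ (2 * m + 2) / (m + 1) ! * iteratedDeriv m f 0 := by
  set c : ℕ → ℂ := fun k => iteratedDeriv k f 0 / (k ! : ℂ)
  have hbound (k : ℕ) (z : ℂ) (hz : z ∈ ball 0 r) :
      ‖c k * (z ^ k * conj z ^ m)‖ ≤ ‖c k‖ * r ^ k * r ^ m := by
    have hz : ‖z‖ ≤ r := (mem_ball_zero_iff.1 hz).le
    rw [norm_mul, norm_mul, norm_pow, norm_pow, RCLike.norm_conj, mul_assoc]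
    gcongr
  have : IsFiniteMeasure (volume.restrict (ball (0 : ℂ) r)) :=
    isFiniteMeasure_restrict.2 measure_ball_lt_top.ne
  have hsum := hasSum_integral_of_dominated_convergence (μ := volume.restrict (ball (0 : ℂ) r))
    (F := fun k z => c k * (z ^ k * conj z ^ m)) (f := fun z => conj z ^ m * f z)
    (fun k _ => ‖c k‖ * r ^ k * r ^ m)
    (fun k => by fun_prop)
    (fun k => ae_restrict_of_forall_mem measurableSet_ball (hbound k))
    (ae_of_all _ fun _ => (summable_norm_iteratedDeriv_div_factorial_mul_pow hf hr0 hr).mul_right _)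
    (integrable_const _)
    (ae_restrict_of_forall_mem measurableSet_ball fun z hz => by
      refine ((hasSum_taylorSeries_zero hf (ball_subset_ball hr.le hz)).mul_left
        (conj z ^ m)).congr_fun fun k => ?_
      ring)
  simp_rw [integral_const_mul, integral_ball_pow_mul_conj_pow _ _ hr0, mul_ite, mul_zero] at hsum
  rw [hsum.unique (hasSum_single m fun k hk => if_neg hk), if_pos rfl, Nat.factorial_succ]
  push_cast
  field_simp
  ring

theorem integral_ball_conj_pow_mul (hR : 0 < R) (hf : DifferentiableOn ℂ f (ball 0 R))
    (hfi : IntegrableOn f (ball 0 R)) (m : ℕ) :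
    ∫ z in ball (0 : ℂ) R, conj z ^ m * f z =
      π * R ^ (2 * m + 2) / (m + 1) ! * iteratedDeriv m f 0 := by
  have hint : IntegrableOn (fun z => conj z ^ m * f z) (ball 0 R) :=
    hfi.bdd_mul (c := R ^ m) (by fun_prop) (ae_restrict_of_forall_mem measurableSet_ball
      fun z hz => by
        rw [norm_pow, RCLike.norm_conj]
        exact pow_le_pow_left₀ (norm_nonneg z) (mem_ball_zero_iff.1 hz).le m)
  obtain ⟨u, hu, hu_mem, hlim⟩ := exists_seq_strictMono_tendsto' hR
  have hballs := tendsto_setIntegral_ball_of_tendsto hint hu.monotone hlim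
  simp_rw [integral_ball_conj_pow_mul_of_lt hf m (hu_mem _).1.le (hu_mem _).2] at hballs
  refine tendsto_nhds_unique hballs ?_
  have : Continuous fun r : ℝ => (π * r ^ (2 * m + 2) / (m + 1) ! * iteratedDeriv m f 0 : ℂ) := by
    fun_prop
  exact (this.tendsto R).comp hlim

end Taylor

/-- `kernelDeriv n a z = ∂ₐⁿ E_a z`, where `E_a z = (1 - a z)⁻²`. -/
def kernelDeriv (n : ℕ) (a z : ℂ) : ℂ := (n + 1)! * z ^ n / (1 - a * z) ^ (n + 2)

theorem one_sub_norm_le_norm_one_sub_mul (a : ℂ) {z : ℂ} (hz : ‖z‖ ≤ 1) :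
    1 - ‖a‖ ≤ ‖1 - a * z‖ :=
  calc 1 - ‖a‖ ≤ ‖(1 : ℂ)‖ - ‖a * z‖ := by
        rw [norm_one, norm_mul]
        linarith [mul_le_of_le_one_right (norm_nonneg a) hz]
    _ ≤ ‖1 - a * z‖ := norm_sub_norm_le _ _

theorem one_sub_mul_ne_zero {a z : ℂ} (ha : ‖a‖ < 1) (hz : ‖z‖ ≤ 1) : 1 - a * z ≠ 0 :=
  norm_pos_iff.1 (by linarith [one_sub_norm_le_norm_one_sub_mul a hz])

theorem differentiableOn_kernelDeriv (n : ℕ) {a : ℂ} (ha : ‖a‖ < 1) :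
    DifferentiableOn ℂ (kernelDeriv n a) (ball 0 1) :=
  DifferentiableOn.div (by fun_prop) (by fun_prop) fun _ hz =>
    pow_ne_zero _ (one_sub_mul_ne_zero ha (mem_ball_zero_iff.1 hz).le)

theorem norm_kernelDeriv_le (n : ℕ) {a z : ℂ} (ha : ‖a‖ < 1) (hz : ‖z‖ ≤ 1) :
    ‖kernelDeriv n a z‖ ≤ (n + 1)! / (1 - ‖a‖) ^ (n + 2) := by
  have ha' : 0 < 1 - ‖a‖ := by linarith
  rw [kernelDeriv, norm_div, norm_mul, norm_pow, norm_pow, norm_natCast]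
  calc (n + 1)! * ‖z‖ ^ n / ‖1 - a * z‖ ^ (n + 2) ≤ (n + 1)! * 1 / (1 - ‖a‖) ^ (n + 2) := by
        gcongr
        · exact pow_le_one₀ (norm_nonneg z) hz
        · exact one_sub_norm_le_norm_one_sub_mul a hz
    _ = (n + 1)! / (1 - ‖a‖) ^ (n + 2) := by rw [mul_one]

theorem integrableOn_sq_norm_kernelDeriv (n : ℕ) {a : ℂ} (ha : ‖a‖ < 1) {μ : Measure ℂ}
    (hμ : μ (ball 0 1) ≠ ⊤) :
    IntegrableOn (fun z => ‖kernelDeriv n a z‖ ^ 2) (ball 0 1) μ := by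
  have : IsFiniteMeasure (μ.restrict (ball 0 1)) := isFiniteMeasure_restrict.2 hμ
  refine (integrable_const (((n + 1)! / (1 - ‖a‖) ^ (n + 2) : ℝ) ^ 2)).mono'
    (((differentiableOn_kernelDeriv n ha).continuousOn.norm.pow 2).aestronglyMeasurable
      measurableSet_ball) (ae_restrict_of_forall_mem measurableSet_ball fun z hz => ?_)
  rw [norm_pow, norm_norm]
  gcongr
  exact norm_kernelDeriv_le n ha (mem_ball_zero_iff.1 hz).le

theorem hasSum_kernelDeriv (n : ℕ) {a z : ℂ} (h : ‖a * z‖ < 1) :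
    HasSum (fun k => (n + 1)! * (k + (n + 1)).choose (n + 1) * a ^ k * z ^ (k + n))
      (kernelDeriv n a z) := by
  have hK : kernelDeriv n a z = (n + 1)! * z ^ n * (1 / (1 - a * z) ^ (n + 1 + 1)) := by
    rw [kernelDeriv]
    ring
  rw [hK]
  refine ((hasSum_choose_mul_geometric_of_norm_lt_one (n + 1) h).mul_left _).congr_fun fun k => ?_
  rw [mul_pow, pow_add]
  ring

theorem hasSum_conj_kernelDeriv (n : ℕ) {a z : ℂ} (h : ‖a * z‖ < 1) :
    HasSum (fun k => (n + 1)! * (k + (n + 1)).choose (n + 1) * conj a ^ k * conj z ^ (k + n))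
      (conj (kernelDeriv n a z)) := by
  simpa only [map_mul, map_pow, map_natCast] using Complex.hasSum_conj'.2 (hasSum_kernelDeriv n h)

theorem factorial_mul_choose_div_factorial (n k : ℕ) :
    ((n + 1)! * (k + (n + 1)).choose (n + 1) / (k + n + 1)! : ℂ) = (k ! : ℂ)⁻¹ := by
  rw [show k + n + 1 = k + (n + 1) by ring, ← Nat.add_choose_mul_factorial_mul_factorial k (n + 1)]
  have hchoose : ((k + (n + 1)).choose (n + 1) : ℂ) ≠ 0 :=
    Nat.cast_ne_zero.2 (Nat.choose_pos (by omega)).ne'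
  have hfactorial : ((n + 1)! : ℂ) ≠ 0 := Nat.cast_ne_zero.2 (Nat.factorial_ne_zero _)
  push_cast
  field_simp

theorem unitDisk_eq_ball : unitDisk = ball 0 1 := by
  ext z
  simp [unitDisk]

theorem integrableOn_μB_iff {E : Type*} [NormedAddCommGroup E] {g : ℂ → E} {s : Set ℂ} :
    IntegrableOn g s μB ↔ IntegrableOn g s := by
  rw [IntegrableOn, IntegrableOn, μB, Measure.restrict_smul,
    integrable_smul_measure (by simp [Real.pi_pos]) ENNReal.ofReal_ne_top]

theorem setIntegral_μB {E : Type*} [NormedAddCommGroup E] [NormedSpace ℝ E] (g : ℂ → E)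
    (s : Set ℂ) : ∫ z in s, g z ∂μB = π⁻¹ • ∫ z in s, g z := by
  rw [μB, Measure.restrict_smul, integral_smul_measure, ENNReal.toReal_ofReal (by positivity)]

theorem integral_conj_kernelDeriv_mul {f : ℂ → ℂ} (hf : DifferentiableOn ℂ f (ball 0 1))
    (hfi : IntegrableOn f (ball 0 1)) (n : ℕ) {a : ℂ} (ha : ‖a‖ < 1) :
    ∫ z in ball (0 : ℂ) 1, conj (kernelDeriv n a z) * f z = π * iteratedDeriv n f (conj a) := by
  have hb : ‖conj a‖ < 1 := by rwa [RCLike.norm_conj]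
  set c : ℕ → ℂ := fun k => (n + 1)! * (k + (n + 1)).choose (n + 1) * conj a ^ k
  have hc : Summable fun k => ‖c k‖ := by
    simpa [c, norm_mul, norm_pow, mul_assoc] using
      (summable_choose_mul_geometric_of_norm_lt_one (n + 1) (r := ‖conj a‖)
        (by rwa [norm_norm])).mul_left ((n + 1)! : ℝ)
  have hexpand : ∀ z ∈ ball (0 : ℂ) 1,
      HasSum (fun k => c k * (conj z ^ (k + n) * f z)) (conj (kernelDeriv n a z) * f z) := by
    intro z hz
    have haz : ‖a * z‖ < 1 := by
      rw [norm_mul]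
      nlinarith [norm_nonneg a, norm_nonneg z, mem_ball_zero_iff.1 hz]
    exact ((hasSum_conj_kernelDeriv n haz).mul_right (f z)).congr_fun fun k => by ring
  have hsum := hasSum_integral_of_dominated_convergence (μ := volume.restrict (ball (0 : ℂ) 1))
    (F := fun k z => c k * (conj z ^ (k + n) * f z)) (fun k z => ‖c k‖ * ‖f z‖)
    (fun k => ((by fun_prop : Continuous fun z : ℂ => conj z ^ (k + n)).aestronglyMeasurable.mul
      (hf.continuousOn.aestronglyMeasurable measurableSet_ball)).const_mul (c k))
    (fun k => ae_restrict_of_forall_mem measurableSet_ball fun z hz => by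
      rw [norm_mul]
      gcongr
      rw [norm_mul, norm_pow, RCLike.norm_conj]
      exact mul_le_of_le_one_left (norm_nonneg (f z))
        (pow_le_one₀ (norm_nonneg z) (mem_ball_zero_iff.1 hz).le))
    (ae_of_all _ fun z => hc.mul_right _)
    (by simpa only [tsum_mul_right] using hfi.norm.const_mul _)
    (ae_restrict_of_forall_mem measurableSet_ball hexpand)
  have hterm (k : ℕ) : ∫ z in ball (0 : ℂ) 1, c k * (conj z ^ (k + n) * f z) =
      π * (iteratedDeriv k (iteratedDeriv n f) 0 / k ! * conj a ^ k) := by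
    rw [integral_const_mul, integral_ball_conj_pow_mul one_pos hf hfi, iteratedDeriv_iteratedDeriv,
      div_eq_mul_inv (iteratedDeriv (k + n) f 0), ← factorial_mul_choose_div_factorial n k]
    simp only [c, ofReal_one, one_pow, mul_one]
    ring
  simp_rw [hterm] at hsum
  exact hsum.unique ((hasSum_taylorSeries_zero (hf.iteratedDeriv_of_isOpen isOpen_ball n)
    (mem_ball_zero_iff.2 hb)).mul_left (π : ℂ))

/-- For every `n ∈ ℕ`, `a ∈ 𝔻`, and `f ∈ A²(𝔻)`, the function
`z ↦ (n+1)!·zⁿ/(1 − a z)^{n+2}` (which is `∂ₐⁿ E_a(z)`) belongs to `A²(𝔻)` and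
`∫_𝔻 conj((n+1)!·zⁿ/(1 − a z)^{n+2})·f(z) dμ(z) = f⁽ⁿ⁾(conj a)`. -/
theorem statement_4 (n : ℕ) (a : ℂ) (ha : a ∈ unitDisk) (f : ℂ → ℂ)
    (hf_hol : DifferentiableOn ℂ f unitDisk)
    (hf_sq : IntegrableOn (fun z => ‖f z‖ ^ 2) unitDisk μB) :
    DifferentiableOn ℂ (fun z => (Nat.factorial (n + 1) : ℂ) * z ^ n / (1 - a * z) ^ (n + 2))
        unitDisk ∧
    IntegrableOn
        (fun z => ‖(Nat.factorial (n + 1) : ℂ) * z ^ n / (1 - a * z) ^ (n + 2)‖ ^ 2)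
        unitDisk μB ∧
    ∫ z in unitDisk,
        (starRingEnd ℂ) ((Nat.factorial (n + 1) : ℂ) * z ^ n / (1 - a * z) ^ (n + 2)) * f z ∂μB
      = iteratedDeriv n f ((starRingEnd ℂ) a) := by
  rw [unitDisk_eq_ball] at hf_hol hf_sq ⊢
  have hfi : IntegrableOn f (ball 0 1) :=
    integrableOn_of_integrableOn_sq_norm measure_ball_lt_top.ne
      (hf_hol.continuousOn.aestronglyMeasurable measurableSet_ball) (integrableOn_μB_iff.1 hf_sq)
  refine ⟨differentiableOn_kernelDeriv n ha,
    integrableOn_μB_iff.2 (integrableOn_sq_norm_kernelDeriv n ha measure_ball_lt_top.ne), ?_⟩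
  have hrepr := integral_conj_kernelDeriv_mul hf_hol hfi n ha
  simp only [kernelDeriv] at hrepr
  rw [setIntegral_μB, hrepr, real_smul,
    ofReal_inv, inv_mul_cancel_left₀ (ofReal_ne_zero.2 Real.pi_ne_zero)]
end
end

section
/- Let φ₁, φ₂ : 𝔻 → 𝔻 be injective holomorphic maps such that F_{φ₁} and F_{φ₂} are square-integrable on 𝔻 × 𝔻. Then F_{φ₁∘φ₂} is square-integrable on 𝔻 × 𝔻 and ‖F_{φ₁∘φ₂}‖_{L²(𝔻×𝔻)} ≤ ‖F_{φ₁}‖_{L²(𝔻×𝔻)} + ‖F_{φ₂}‖_{L²(𝔻×𝔻)}. -/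
/-!
By the chain rule, `F_{φ₁∘φ₂}(z, w) = φ₂'(z) φ₂'(w) F_{φ₁}(φ₂ z, φ₂ w) + F_{φ₂}(z, w)`.
The real Jacobian of `φ₂ × φ₂` at `(z, w)` is `|φ₂'(z)|² |φ₂'(w)|²`, so by the change of variables
formula the `L²` norm of the first term on `𝔻 × 𝔻` is that of `F_{φ₁}` on `φ₂(𝔻) × φ₂(𝔻) ⊆ 𝔻 × 𝔻`.
Minkowski's inequality concludes.
-/

open MeasureTheory Complex Set

noncomputable section

/-- The cocycle `F_φ(z,w) = φ'(z)φ'(w)/(φ(z) − φ(w))² − 1/(z − w)²`. -/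
def Fcocycle (φ : ℂ → ℂ) (z w : ℂ) : ℂ :=
  deriv φ z * deriv φ w / (φ z - φ w) ^ 2 - 1 / (z - w) ^ 2

open scoped ENNReal

theorem Fcocycle_comp {φ₁ φ₂ : ℂ → ℂ} {z w : ℂ} (h₁z : DifferentiableAt ℂ φ₁ (φ₂ z))
    (h₁w : DifferentiableAt ℂ φ₁ (φ₂ w)) (h₂z : DifferentiableAt ℂ φ₂ z)
    (h₂w : DifferentiableAt ℂ φ₂ w) :
    Fcocycle (φ₁ ∘ φ₂) z w =
      deriv φ₂ z * deriv φ₂ w * Fcocycle φ₁ (φ₂ z) (φ₂ w) + Fcocycle φ₂ z w := by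
  simp only [Fcocycle, Function.comp_apply, deriv_comp z h₁z h₂z, deriv_comp w h₁w h₂w]
  ring

theorem aestronglyMeasurable_Fcocycle {ψ : ℂ → ℂ} {U : Set ℂ} (hU : MeasurableSet U)
    (hψ : ContinuousOn ψ U) (ν : Measure (ℂ × ℂ)) :
    AEStronglyMeasurable (fun p : ℂ × ℂ => Fcocycle ψ p.1 p.2) (ν.restrict (U ×ˢ U)) := by
  have hUU := hU.prod hU
  have h₁ : AEMeasurable (fun p : ℂ × ℂ => ψ p.1) (ν.restrict (U ×ˢ U)) :=
    (hψ.comp continuous_fst.continuousOn fun _ hp => hp.1).aemeasurable hUU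
  have h₂ : AEMeasurable (fun p : ℂ × ℂ => ψ p.2) (ν.restrict (U ×ˢ U)) :=
    (hψ.comp continuous_snd.continuousOn fun _ hp => hp.2).aemeasurable hUU
  have hψ' := measurable_deriv ψ
  refine AEMeasurable.aestronglyMeasurable (.sub (.div ?_ ((h₁.sub h₂).pow_const 2)) ?_)
  · exact ((hψ'.comp measurable_fst).mul (hψ'.comp measurable_snd)).aemeasurable
  · exact (measurable_const.div ((measurable_fst.sub measurable_snd).pow_const 2)).aemeasurable

theorem det_restrictScalars_toSpanSingleton (c : ℂ) :
    ((ContinuousLinearMap.toSpanSingleton ℂ c).restrictScalars ℝ).det = ‖c‖ ^ 2 := by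
  simp [ContinuousLinearMap.det, LinearMap.det_restrictScalars, Algebra.norm_complex_eq,
    Complex.normSq_eq_norm_sq]

theorem lintegral_image_prodMap_eq_lintegral_deriv_mul {μ ν : Measure ℂ} [μ.IsAddHaarMeasure]
    [ν.IsAddHaarMeasure] {U V : Set ℂ} {f g f' g' : ℂ → ℂ} (hU : MeasurableSet U)
    (hV : MeasurableSet V) (hf : ∀ z ∈ U, HasDerivWithinAt f (f' z) U z)
    (hg : ∀ w ∈ V, HasDerivWithinAt g (g' w) V w) (hfi : InjOn f U) (hgi : InjOn g V)
    (G : ℂ × ℂ → ℝ≥0∞) :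
    ∫⁻ p in Prod.map f g '' (U ×ˢ V), G p ∂μ.prod ν =
      ∫⁻ p in U ×ˢ V, ‖f' p.1‖ₑ ^ 2 * ‖g' p.2‖ₑ ^ 2 * G (f p.1, g p.2) ∂μ.prod ν := by
  let A : ℂ → ℂ →L[ℝ] ℂ := fun c => (ContinuousLinearMap.toSpanSingleton ℂ c).restrictScalars ℝ
  have hA : ∀ {h h' : ℂ → ℂ} {S : Set ℂ} {z : ℂ} {T : Set ℂ}, T ⊆ S →
      HasDerivWithinAt h (h' z) S z → HasFDerivWithinAt h (A (h' z)) T z :=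
    fun hT hd => (hd.hasFDerivWithinAt.restrictScalars ℝ).mono hT
  have hD : ∀ p ∈ U ×ˢ V,
      HasFDerivWithinAt (Prod.map f g) ((A (f' p.1)).prodMap (A (g' p.2))) (U ×ˢ V) p :=
    fun p hp => HasFDerivWithinAt.prodMap p (hA (fst_image_prod_subset _ _) (hf _ hp.1))
      (hA (snd_image_prod_subset _ _) (hg _ hp.2))
  have hdet : ∀ c d : ℂ, ENNReal.ofReal |((A c).prodMap (A d)).det| = ‖c‖ₑ ^ 2 * ‖d‖ₑ ^ 2 := by
    intro c d
    have hc := det_restrictScalars_toSpanSingleton c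
    have hd := det_restrictScalars_toSpanSingleton d
    rw [ContinuousLinearMap.det] at hc hd
    rw [ContinuousLinearMap.det, ContinuousLinearMap.coe_prodMap, LinearMap.det_prodMap, hc, hd,
      abs_of_nonneg (by positivity), ENNReal.ofReal_mul (by positivity), ← ofReal_norm,
      ← ofReal_norm, ENNReal.ofReal_pow (norm_nonneg _), ENNReal.ofReal_pow (norm_nonneg _)]
  rw [lintegral_image_eq_lintegral_abs_det_fderiv_mul _ (hU.prod hV) hD (hfi.prodMap hgi)]
  simp only [hdet, Prod.map]

theorem eLpNorm_two_sq_eq_lintegral {α E : Type*} [MeasurableSpace α] [NormedAddCommGroup E]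
    (ν : Measure α) (h : α → E) :
    eLpNorm h 2 ν ^ 2 = ∫⁻ x, ‖h x‖ₑ ^ 2 ∂ν := by
  simpa using eLpNorm_nnreal_pow_eq_lintegral (f := h) (μ := ν) (p := 2) two_ne_zero

theorem eLpNorm_deriv_smul_comp_prodMap_le {E : Type*} [NormedAddCommGroup E] [NormedSpace ℂ E]
    {μ : Measure ℂ} [μ.IsAddHaarMeasure] {U : Set ℂ} {f f' : ℂ → ℂ} (hU : MeasurableSet U)
    (hf : ∀ z ∈ U, HasDerivWithinAt f (f' z) U z) (hfi : InjOn f U) (hfU : MapsTo f U U)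
    (F : ℂ × ℂ → E) :
    eLpNorm (fun p => (f' p.1 * f' p.2) • F (f p.1, f p.2)) 2 ((μ.prod μ).restrict (U ×ˢ U)) ≤
      eLpNorm F 2 ((μ.prod μ).restrict (U ×ˢ U)) := by
  rw [← ENNReal.pow_le_pow_left_iff two_ne_zero, eLpNorm_two_sq_eq_lintegral,
    eLpNorm_two_sq_eq_lintegral]
  calc ∫⁻ p in U ×ˢ U, ‖(f' p.1 * f' p.2) • F (f p.1, f p.2)‖ₑ ^ 2 ∂μ.prod μ
      = ∫⁻ p in Prod.map f f '' (U ×ˢ U), ‖F p‖ₑ ^ 2 ∂μ.prod μ := by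
        simp only [lintegral_image_prodMap_eq_lintegral_deriv_mul hU hU hf hf hfi hfi, enorm_smul,
          enorm_mul, mul_pow]
    _ ≤ ∫⁻ p in U ×ˢ U, ‖F p‖ₑ ^ 2 ∂μ.prod μ := lintegral_mono_set (hfU.prodMap hfU).image_subset

theorem sqrt_integral_norm_sq_eq_toReal_eLpNorm {α E : Type*} [MeasurableSpace α]
    [NormedAddCommGroup E] {ν : Measure α} {h : α → E} (hh : AEStronglyMeasurable h ν) :
    √(∫ x, ‖h x‖ ^ 2 ∂ν) = (eLpNorm h 2 ν).toReal := by
  rw [integral_eq_lintegral_of_nonneg_ae (f := fun x => ‖h x‖ ^ 2)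
    (.of_forall fun _ => by positivity) (hh.norm.pow 2)]
  simp only [ENNReal.ofReal_pow (norm_nonneg _), ofReal_norm, ← eLpNorm_two_sq_eq_lintegral,
    ENNReal.toReal_pow, Real.sqrt_sq ENNReal.toReal_nonneg]

theorem integrable_sq_norm_and_sqrt_integral_le_of_ae_eq_add {α E : Type*} [MeasurableSpace α]
    [NormedAddCommGroup E] {ν : Measure α} {f g h u : α → E} (hf : AEStronglyMeasurable f ν)
    (hu : MemLp u 2 ν) (hh : MemLp h 2 ν) (hfgh : f =ᵐ[ν] g + h)
    (hgu : eLpNorm g 2 ν ≤ eLpNorm u 2 ν) :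
    Integrable (fun x => ‖f x‖ ^ 2) ν ∧
      √(∫ x, ‖f x‖ ^ 2 ∂ν) ≤ √(∫ x, ‖u x‖ ^ 2 ∂ν) + √(∫ x, ‖h x‖ ^ 2 ∂ν) := by
  have hg : MemLp g 2 ν :=
    ⟨(hf.sub hh.1).congr (by filter_upwards [hfgh] with x hx; simp [hx]),
      hgu.trans_lt hu.eLpNorm_lt_top⟩
  refine ⟨(memLp_two_iff_integrable_sq_norm hf).1 ((hg.add hh).ae_eq hfgh.symm), ?_⟩
  rw [sqrt_integral_norm_sq_eq_toReal_eLpNorm hf, sqrt_integral_norm_sq_eq_toReal_eLpNorm hu.1,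
    sqrt_integral_norm_sq_eq_toReal_eLpNorm hh.1,
    ← ENNReal.toReal_add hu.eLpNorm_ne_top hh.eLpNorm_ne_top]
  refine ENNReal.toReal_mono (ENNReal.add_ne_top.2 ⟨hu.eLpNorm_ne_top, hh.eLpNorm_ne_top⟩) ?_
  calc eLpNorm f 2 ν = eLpNorm (g + h) 2 ν := eLpNorm_congr_ae hfgh
    _ ≤ eLpNorm g 2 ν + eLpNorm h 2 ν := eLpNorm_add_le hg.1 hh.1 one_le_two
    _ ≤ eLpNorm u 2 ν + eLpNorm h 2 ν := by gcongr

theorem isOpen_unitDisk : IsOpen unitDisk := by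
  simpa [unitDisk, Metric.ball, dist_zero_right] using Metric.isOpen_ball (x := (0 : ℂ)) (ε := 1)

instance : μB.IsAddHaarMeasure :=
  .smul _ (by simp [Real.pi_pos]) ENNReal.ofReal_ne_top

theorem statement_9_general (φ₁ φ₂ : ℂ → ℂ)
    (h₁d : DifferentiableOn ℂ φ₁ unitDisk)
    (h₂m : Set.MapsTo φ₂ unitDisk unitDisk)
    (h₂d : DifferentiableOn ℂ φ₂ unitDisk)
    (h₂i : Set.InjOn φ₂ unitDisk)
    (h₁sq : IntegrableOn (fun p : ℂ × ℂ => ‖Fcocycle φ₁ p.1 p.2‖ ^ 2)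
      (unitDisk ×ˢ unitDisk) (μB.prod μB))
    (h₂sq : IntegrableOn (fun p : ℂ × ℂ => ‖Fcocycle φ₂ p.1 p.2‖ ^ 2)
      (unitDisk ×ˢ unitDisk) (μB.prod μB)) :
    IntegrableOn (fun p : ℂ × ℂ => ‖Fcocycle (φ₁ ∘ φ₂) p.1 p.2‖ ^ 2)
        (unitDisk ×ˢ unitDisk) (μB.prod μB) ∧
    Real.sqrt (∫ p in unitDisk ×ˢ unitDisk, ‖Fcocycle (φ₁ ∘ φ₂) p.1 p.2‖ ^ 2 ∂(μB.prod μB))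
      ≤ Real.sqrt (∫ p in unitDisk ×ˢ unitDisk, ‖Fcocycle φ₁ p.1 p.2‖ ^ 2 ∂(μB.prod μB))
        + Real.sqrt (∫ p in unitDisk ×ˢ unitDisk, ‖Fcocycle φ₂ p.1 p.2‖ ^ 2 ∂(μB.prod μB)) := by
  have hU := isOpen_unitDisk
  have hd₁ : ∀ z ∈ unitDisk, DifferentiableAt ℂ φ₁ z := fun z hz =>
    h₁d.differentiableAt (hU.mem_nhds hz)
  have hd₂ : ∀ z ∈ unitDisk, DifferentiableAt ℂ φ₂ z := fun z hz =>
    h₂d.differentiableAt (hU.mem_nhds hz)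
  have hF₁ := (memLp_two_iff_integrable_sq_norm
    (aestronglyMeasurable_Fcocycle hU.measurableSet h₁d.continuousOn (μB.prod μB))).2 h₁sq
  have hF₂ := (memLp_two_iff_integrable_sq_norm
    (aestronglyMeasurable_Fcocycle hU.measurableSet h₂d.continuousOn (μB.prod μB))).2 h₂sq
  refine integrable_sq_norm_and_sqrt_integral_le_of_ae_eq_add (aestronglyMeasurable_Fcocycle
    hU.measurableSet (h₁d.continuousOn.comp h₂d.continuousOn h₂m) _) hF₁ hF₂ ?_
    (eLpNorm_deriv_smul_comp_prodMap_le hU.measurableSet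
      (fun z hz => (hd₂ z hz).hasDerivAt.hasDerivWithinAt) h₂i h₂m _)
  filter_upwards [ae_restrict_mem (hU.measurableSet.prod hU.measurableSet)] with p hp
  exact Fcocycle_comp (hd₁ _ (h₂m hp.1)) (hd₁ _ (h₂m hp.2)) (hd₂ _ hp.1) (hd₂ _ hp.2)

/-- If `F_{φ₁}` and `F_{φ₂}` are square-integrable on `𝔻 × 𝔻`, then so is
`F_{φ₁∘φ₂}` and `‖F_{φ₁∘φ₂}‖_{L²} ≤ ‖F_{φ₁}‖_{L²} + ‖F_{φ₂}‖_{L²}`. -/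
theorem statement_9 (φ₁ φ₂ : ℂ → ℂ)
    (h₁m : Set.MapsTo φ₁ unitDisk unitDisk)
    (h₁d : DifferentiableOn ℂ φ₁ unitDisk)
    (h₁i : Set.InjOn φ₁ unitDisk)
    (h₂m : Set.MapsTo φ₂ unitDisk unitDisk)
    (h₂d : DifferentiableOn ℂ φ₂ unitDisk)
    (h₂i : Set.InjOn φ₂ unitDisk)
    (h₁sq : IntegrableOn (fun p : ℂ × ℂ => ‖Fcocycle φ₁ p.1 p.2‖ ^ 2)
      (unitDisk ×ˢ unitDisk) (μB.prod μB))
    (h₂sq : IntegrableOn (fun p : ℂ × ℂ => ‖Fcocycle φ₂ p.1 p.2‖ ^ 2)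
      (unitDisk ×ˢ unitDisk) (μB.prod μB)) :
    IntegrableOn (fun p : ℂ × ℂ => ‖Fcocycle (φ₁ ∘ φ₂) p.1 p.2‖ ^ 2)
        (unitDisk ×ˢ unitDisk) (μB.prod μB) ∧
    Real.sqrt (∫ p in unitDisk ×ˢ unitDisk, ‖Fcocycle (φ₁ ∘ φ₂) p.1 p.2‖ ^ 2 ∂(μB.prod μB))
      ≤ Real.sqrt (∫ p in unitDisk ×ˢ unitDisk, ‖Fcocycle φ₁ p.1 p.2‖ ^ 2 ∂(μB.prod μB))
        + Real.sqrt (∫ p in unitDisk ×ˢ unitDisk, ‖Fcocycle φ₂ p.1 p.2‖ ^ 2 ∂(μB.prod μB)) :=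
  statement_9_general φ₁ φ₂ h₁d h₂m h₂d h₂i h₁sq h₂sq
end
end
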